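/- For every n ≥ 5: every 3-element subset of Ω_n forms a copy of D_1 with exactly n−3 other 3-element subsets and a copy of D_2 with exactly 2(n−3) other 3-element subsets; consequently sat_○(n, D_1) ≥ n(n−1)/6 and sat_○(n, D_2) ≥ n(n−1)(n−2)/(6(2n−5)). -/

import Mathlib

open Finset

/-- An abstract convex geometric hypergraph: `m` vertices on a circle, with the
cyclic ordering `0 < 1 < ⋯ < m-1 < 0`, together with a family of edges. -/
structure CGH where
  m : ℕ
  edges : Finset (Finset (Fin m))

/-- A list of points of `Fin n` is in (strict) cyclic order if some rotation of it
is strictly increasing in the linear order of `Fin n`. -/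
def CyclicSorted {n : ℕ} (l : List (Fin n)) : Prop :=
  ∃ k : ℕ, (l.rotate k).Chain' (· < ·)

/-- `H` contains a subhypergraph isomorphic to the convex geometric hypergraph `F`:
there is an injection of the vertices of `F` into `Fin n` respecting the cyclic
orderings and sending every edge of `F` to an edge of `H`. -/
def HasCopy (F : CGH) {n : ℕ} (H : Finset (Finset (Fin n))) : Prop :=
  ∃ f : Fin F.m → Fin n, Function.Injective f ∧ CyclicSorted (List.ofFn f) ∧
    ∀ e ∈ F.edges, e.image f ∈ H

/-- `H` is an `F`-saturated `r`-uniform convex geometric hypergraph on `Fin n`. -/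
def IsSat (F : CGH) (r : ℕ) {n : ℕ} (H : Finset (Finset (Fin n))) : Prop :=
  (∀ h ∈ H, h.card = r) ∧ ¬ HasCopy F H ∧
    ∀ e : Finset (Fin n), e.card = r → e ∉ H → HasCopy F (insert e H)

/-- The saturation number `sat_○(n, F)` for `r`-uniform cgh's on `Fin n`. -/
noncomputable def satNum (F : CGH) (r n : ℕ) : ℕ :=
  sInf {k | ∃ H : Finset (Finset (Fin n)), IsSat F r H ∧ H.card = k}

/-- `M_1^{(r)}`: two geometrically disjoint `r`-tuples. -/
def M1r (r : ℕ) : CGH where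
  m := 2 * r
  edges := {Finset.univ.filter (fun i : Fin (2 * r) => (i : ℕ) < r),
            Finset.univ.filter (fun i : Fin (2 * r) => r ≤ (i : ℕ))}

def M1cgh : CGH := ⟨6, {({0, 1, 2} : Finset (Fin 6)), ({3, 4, 5} : Finset (Fin 6))}⟩
def M2cgh : CGH := ⟨6, {({0, 1, 3} : Finset (Fin 6)), ({2, 4, 5} : Finset (Fin 6))}⟩
def M3cgh : CGH := ⟨6, {({0, 2, 4} : Finset (Fin 6)), ({1, 3, 5} : Finset (Fin 6))}⟩
def S1cgh : CGH := ⟨5, {({0, 1, 4} : Finset (Fin 5)), ({0, 2, 3} : Finset (Fin 5))}⟩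
def S2cgh : CGH := ⟨5, {({0, 1, 2} : Finset (Fin 5)), ({0, 3, 4} : Finset (Fin 5))}⟩
def S3cgh : CGH := ⟨5, {({0, 1, 3} : Finset (Fin 5)), ({0, 2, 4} : Finset (Fin 5))}⟩
def D1cgh : CGH := ⟨4, {({0, 1, 2} : Finset (Fin 4)), ({0, 2, 3} : Finset (Fin 4))}⟩
def D2cgh : CGH := ⟨4, {({0, 1, 2} : Finset (Fin 4)), ({0, 1, 3} : Finset (Fin 4))}⟩

/-- The closed clockwise arc `[a, b]` in `Fin n`. -/
def arcCC {n : ℕ} (a b : Fin n) : Finset (Fin n) :=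
  if a ≤ b then Finset.univ.filter (fun x => a ≤ x ∧ x ≤ b)
  else Finset.univ.filter (fun x => a ≤ x ∨ x ≤ b)

/-- The open clockwise arc `(a, b)` in `Fin n`. -/
def arcOO {n : ℕ} (a b : Fin n) : Finset (Fin n) :=
  if a < b then Finset.univ.filter (fun x => a < x ∧ x < b)
  else Finset.univ.filter (fun x => a < x ∨ x < b)

/-- The tuple `(w_1, …, w_{2ℓ+1})` (`0`-indexed here) consists of distinct points with
`w_1 < w_3 < ⋯ < w_{2ℓ+1} < w_2 < w_4 < ⋯ < w_{2ℓ} < w_1` in the cyclic order. -/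
def SemiValid {n : ℕ} (ℓ : ℕ) (w : Fin (2 * ℓ + 1) → Fin n) : Prop :=
  Function.Injective w ∧
    CyclicSorted (List.ofFn fun p : Fin (2 * ℓ + 1) =>
      w ⟨(2 * (p : ℕ)) % (2 * ℓ + 1), Nat.mod_lt _ (by omega)⟩)

/-- A semi-valid tuple is `r`-valid if moreover `|[w_i, w_{i-1}]| ≥ r` for all `i`. -/
def RValid {n : ℕ} (r ℓ : ℕ) (w : Fin (2 * ℓ + 1) → Fin n) : Prop :=
  SemiValid ℓ w ∧ ∀ i : Fin (2 * ℓ + 1), r ≤ (arcCC (w i) (w (i - 1))).card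

/-- `H_n^{(r)}(C)`: all `r`-sets meeting every interval `[w_i, w_{i-1}]`. -/
def HnC {n : ℕ} (r ℓ : ℕ) (w : Fin (2 * ℓ + 1) → Fin n) : Finset (Finset (Fin n)) :=
  (Finset.powersetCard r Finset.univ).filter fun e =>
    ∀ i : Fin (2 * ℓ + 1), (e ∩ arcCC (w i) (w (i - 1))).Nonempty

/-- `j` is the vertex `λ(v)` for `v` in `H`. -/
def IsLam {n : ℕ} [NeZero n] (H : Finset (Finset (Fin n))) (v j : Fin n) : Prop :=
  (∃ h ∈ H, v ∈ h ∧ h ⊆ arcCC j v) ∧ ¬ ∃ h ∈ H, v ∈ h ∧ h ⊆ arcCC (j + 1) v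

/-- `j` is the vertex `ρ(v)` for `v` in `H`. -/
def IsRho {n : ℕ} [NeZero n] (H : Finset (Finset (Fin n))) (v j : Fin n) : Prop :=
  (∃ h ∈ H, v ∈ h ∧ h ⊆ arcCC v j) ∧ ¬ ∃ h ∈ H, v ∈ h ∧ h ⊆ arcCC v (j - 1)

noncomputable def lamF {n : ℕ} [NeZero n] (H : Finset (Finset (Fin n))) (v : Fin n) : Fin n :=
  letI := Classical.propDecidable (∃ j, IsLam H v j)
  if h : ∃ j, IsLam H v j then h.choose else v

noncomputable def rhoF {n : ℕ} [NeZero n] (H : Finset (Finset (Fin n))) (v : Fin n) : Fin n :=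
  letI := Classical.propDecidable (∃ j, IsRho H v j)
  if h : ∃ j, IsRho H v j then h.choose else v

/-- Strict cyclic betweenness on `Fin n`. -/
def CyclicSbtw {n : ℕ} (a b c : Fin n) : Prop :=
  (a < b ∧ b < c) ∨ (b < c ∧ c < a) ∨ (c < a ∧ a < b)

/-- Isomorphism of two cgh's on `Fin n`: a bijection of the vertex set respecting the
cyclic order and inducing a bijection of the edge sets. -/
def CGHIso {n : ℕ} (H H' : Finset (Finset (Fin n))) : Prop :=
  ∃ g : Fin n ≃ Fin n,
    (∀ a b c : Fin n, CyclicSbtw a b c → CyclicSbtw (g a) (g b) (g c)) ∧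
    ∀ e : Finset (Fin n), e ∈ H ↔ e.image g ∈ H'

/-- The 3-cgh `H_n^{(3)}`: all triples containing `v_0`, together with all triples
containing one of the pairs `{v_1, v_{n-2}}`, `{v_1, v_{n-1}}`, `{v_2, v_{n-1}}`. -/
def Hn3 (n : ℕ) (hn : 6 ≤ n) : Finset (Finset (Fin n)) :=
  (Finset.powersetCard 3 Finset.univ).filter fun e =>
    (⟨0, by omega⟩ : Fin n) ∈ e ∨
    ((⟨1, by omega⟩ : Fin n) ∈ e ∧ (⟨n - 2, by omega⟩ : Fin n) ∈ e) ∨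
    ((⟨1, by omega⟩ : Fin n) ∈ e ∧ (⟨n - 1, by omega⟩ : Fin n) ∈ e) ∨
    ((⟨2, by omega⟩ : Fin n) ∈ e ∧ (⟨n - 1, by omega⟩ : Fin n) ∈ e)

/-- Saturation with respect to a family of cgh's. -/
def FamSat (ℱ : Set CGH) (r : ℕ) {n : ℕ} (H : Finset (Finset (Fin n))) : Prop :=
  (∀ h ∈ H, h.card = r) ∧ (∀ F ∈ ℱ, ¬ HasCopy F H) ∧
    ∀ e : Finset (Fin n), e.card = r → e ∉ H → ∃ F ∈ ℱ, HasCopy F (insert e H)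

noncomputable def famSatNum (ℱ : Set CGH) (r n : ℕ) : ℕ :=
  sInf {k | ∃ H : Finset (Finset (Fin n)), FamSat ℱ r H ∧ H.card = k}

/-- Rotation of a point of `Fin n` by an integer amount `m`. -/
def finShift {n : ℕ} (hn : 0 < n) (v : Fin n) (m : ℤ) : Fin n :=
  ⟨(((v : ℤ) + m) % (n : ℤ)).toNat, by
    have h0 : (0 : ℤ) < (n : ℤ) := by exact_mod_cast hn
    have h1 := Int.emod_nonneg ((v : ℤ) + m) (by omega : (n : ℤ) ≠ 0)
    have h2 := Int.emod_lt_of_pos ((v : ℤ) + m) h0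
    omega⟩

/-- The tuple `w` is `(i,k)`-consecutive: starting from position `i`, the entries at
positions `i, i+2, …, i+2(k-1)` are `k` consecutive points `v_j, v_{j+1}, …, v_{j+k-1}`. -/
def ConsecAt {n ℓ : ℕ} (hn : 0 < n) (w : Fin (2 * ℓ + 1) → Fin n)
    (i : Fin (2 * ℓ + 1)) (k : ℕ) : Prop :=
  ∃ j : Fin n, ∀ s : ℕ, s < k →
    w (i + ⟨(2 * s) % (2 * ℓ + 1), Nat.mod_lt _ (by omega)⟩) = finShift hn j s

/-- The tuple `C_{i,k,m}`: the `k` consecutive points at positions `i, i+2, …, i+2(k-1)`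
are rotated by `m` units; all other entries are unchanged. -/
def shiftTuple {n ℓ : ℕ} (hn : 0 < n) (w : Fin (2 * ℓ + 1) → Fin n)
    (i : Fin (2 * ℓ + 1)) (k : ℕ) (m : ℤ) : Fin (2 * ℓ + 1) → Fin n :=
  fun p => if (p - i).val % 2 = 0 ∧ (p - i).val / 2 < k then finShift hn (w p) m else w p

/-! Write `e = {a, b, c}` with `a < b < c`. If `{e, f}` is a copy of `D₁` or `D₂` then
`f = e - w + z` for some `w ∈ e` and `z ∉ e`, and `{e, f}` is a copy of `D₁` exactly when `w` and
`z` are opposite vertices of the convex quadrilateral `e ∪ {z}`, a copy of `D₂` exactly when they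
are adjacent. Every `z ∉ e` is opposite to exactly one vertex of `e`, which gives the counts
`n - 3` and `2 (n - 3)`. In an `F`-saturated `H` every triple is an edge of `H` or forms a copy
of `F` with an edge of `H`, so `C(n, 3) ≤ |H| (1 + count)`. -/

theorem Finset.exists_lt_lt_of_card_eq_three {α : Type*} [LinearOrder α] {s : Finset α}
    (h : s.card = 3) : ∃ a b c, a < b ∧ b < c ∧ s = {a, b, c} := by
  refine ⟨s.orderEmbOfFin h 0, s.orderEmbOfFin h 1, s.orderEmbOfFin h 2, by simp, by simp, ?_⟩
  apply coe_injective
  rw [← s.range_orderEmbOfFin h]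
  ext x
  simp only [Set.mem_range, Fin.exists_fin_succ, Fin.exists_fin_zero, coe_insert, coe_singleton,
    Set.mem_insert_iff, Set.mem_singleton_iff]
  aesop

theorem Finset.injOn_insert_erase {α : Type*} [DecidableEq α] (s : Finset α) :
    Set.InjOn (fun x : α × α => insert x.2 (s.erase x.1)) {x | x.1 ∈ s ∧ x.2 ∉ s} := by
  rintro ⟨w, z⟩ ⟨hw, hz⟩ ⟨w', z'⟩ ⟨hw', hz'⟩ heq
  simp only at hw hz hw' hz' heq
  have hz_mem : z ∈ insert z' (s.erase w') := heq ▸ mem_insert_self z _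
  have hw_mem : w ∉ insert z' (s.erase w') := heq ▸ by grind
  simp only [mem_insert, mem_erase] at hz_mem hw_mem
  grind

theorem Finset.card_insert_erase_of_notMem {α : Type*} [DecidableEq α] {s : Finset α} {w z : α}
    (hw : w ∈ s) (hz : z ∉ s) : (insert z (s.erase w)).card = s.card := by
  rw [card_insert_of_notMem (fun h => hz (mem_of_mem_erase h)), card_erase_of_mem hw,
    Nat.sub_add_cancel (card_pos.2 ⟨w, hw⟩)]

theorem ncard_setOf_insert_erase {α : Type*} [DecidableEq α] [Fintype α] {s : Finset α} {k : ℕ}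
    (hs : s.card = k) (P : α × α → Prop) [DecidablePred P] :
    {f | f.card = k ∧ ∃ z ∉ s, ∃ w ∈ s, P (w, z) ∧ f = insert z (s.erase w)}.ncard =
      ((s ×ˢ sᶜ).filter P).card := by
  subst hs
  have : {f | f.card = s.card ∧ ∃ z ∉ s, ∃ w ∈ s, P (w, z) ∧ f = insert z (s.erase w)} =
      ↑(((s ×ˢ sᶜ).filter P).image fun x => insert x.2 (s.erase x.1)) := by
    ext f
    simp only [Set.mem_ofPred_eq, coe_image, coe_filter, mem_product, mem_compl, Set.mem_image]
    constructor
    · rintro ⟨-, z, hz, w, hw, hP, rfl⟩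
      exact ⟨(w, z), ⟨⟨hw, hz⟩, hP⟩, rfl⟩
    · rintro ⟨⟨w, z⟩, ⟨⟨hw, hz⟩, hP⟩, rfl⟩
      exact ⟨card_insert_erase_of_notMem hw hz, z, hz, w, hw, hP, rfl⟩
  rw [this, Set.ncard_coe_finset, card_image_of_injOn]
  exact s.injOn_insert_erase.mono fun x hx => by simpa using (mem_filter.1 hx).1

theorem Nat.six_mul_choose_three (n : ℕ) : 6 * n.choose 3 = n * (n - 1) * (n - 2) := by
  rw [show 6 = Nat.factorial 3 from rfl, ← Nat.descFactorial_eq_factorial_mul_choose]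
  simp only [Nat.descFactorial, Nat.sub_zero, Nat.mul_one]
  ring

section

variable {n : ℕ}

theorem cyclicSorted_iff {l : List (Fin n)} :
    CyclicSorted l ↔ ∃ k, (l.rotate k).IsChain (· < ·) := Iff.rfl

theorem CyclicSorted.rotate {l : List (Fin n)} (h : CyclicSorted l) (m : ℕ) :
    CyclicSorted (l.rotate m) := by
  obtain ⟨k, hk⟩ := cyclicSorted_iff.1 h
  rcases Nat.eq_zero_or_pos l.length with h0 | hpos
  · simpa [List.length_eq_zero_iff.1 h0] using h
  refine cyclicSorted_iff.2 ⟨k + (l.length - 1) * m, ?_⟩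
  have hmod : (m + (k + (l.length - 1) * m)) % l.length = k % l.length := by
    obtain ⟨t, ht⟩ : ∃ t, l.length = t + 1 := ⟨l.length - 1, by omega⟩
    rw [show m + (k + (l.length - 1) * m) = k + l.length * m by rw [ht, Nat.add_sub_cancel]; ring,
      Nat.add_mul_mod_self_left]
  rwa [List.rotate_rotate, ← List.rotate_mod, hmod, List.rotate_mod]

theorem CyclicSorted.nodup {l : List (Fin n)} (h : CyclicSorted l) : l.Nodup := by
  obtain ⟨k, hk⟩ := cyclicSorted_iff.1 h
  exact List.nodup_rotate.1 (List.isChain_iff_pairwise.1 hk).nodup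

theorem CyclicSorted.pairwise_ne₄ {p q r s : Fin n} (h : CyclicSorted [p, q, r, s]) :
    p ≠ q ∧ p ≠ r ∧ p ≠ s ∧ q ≠ r ∧ q ≠ s ∧ r ≠ s := by
  simpa [and_assoc] using h.nodup

theorem cyclicSorted_four_iff {p q r s : Fin n} :
    CyclicSorted [p, q, r, s] ↔
      (p < q ∧ q < r ∧ r < s) ∨ (q < r ∧ r < s ∧ s < p) ∨
        (r < s ∧ s < p ∧ p < q) ∨ (s < p ∧ p < q ∧ q < r) := by
  rw [cyclicSorted_iff]
  constructor
  · rintro ⟨k, hk⟩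
    rw [← List.rotate_mod] at hk
    have hk4 : k % 4 < 4 := Nat.mod_lt _ (by norm_num)
    generalize k % 4 = j at hk hk4
    interval_cases j <;> simp_all [List.isChain_cons_cons]
  · rintro (h | h | h | h)
    · exact ⟨0, by simp_all [List.isChain_cons_cons]⟩
    · exact ⟨1, by simp_all [List.isChain_cons_cons]⟩
    · exact ⟨2, by simp_all [List.isChain_cons_cons]⟩
    · exact ⟨3, by simp_all [List.isChain_cons_cons]⟩

theorem hasCopy_D1_iff {H : Finset (Finset (Fin n))} :
    HasCopy D1cgh H ↔ ∃ p q r s, CyclicSorted [p, q, r, s] ∧ {p, q, r} ∈ H ∧ {p, r, s} ∈ H := by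
  unfold HasCopy D1cgh
  constructor
  · rintro ⟨g, -, hg, hH⟩
    exact ⟨g 0, g 1, g 2, g 3, by simpa [List.ofFn_succ] using hg,
      by simpa using hH {0, 1, 2} (by simp), by simpa using hH {0, 2, 3} (by simp)⟩
  · rintro ⟨p, q, r, s, h, h₁, h₂⟩
    exact ⟨![p, q, r, s], List.nodup_ofFn.1 h.nodup, h, by simp [h₁, h₂]⟩

theorem hasCopy_D2_iff {H : Finset (Finset (Fin n))} :
    HasCopy D2cgh H ↔ ∃ p q r s, CyclicSorted [p, q, r, s] ∧ {p, q, r} ∈ H ∧ {p, q, s} ∈ H := by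
  unfold HasCopy D2cgh
  constructor
  · rintro ⟨g, -, hg, hH⟩
    exact ⟨g 0, g 1, g 2, g 3, by simpa [List.ofFn_succ] using hg,
      by simpa using hH {0, 1, 2} (by simp), by simpa using hH {0, 1, 3} (by simp)⟩
  · rintro ⟨p, q, r, s, h, h₁, h₂⟩
    exact ⟨![p, q, r, s], List.nodup_ofFn.1 h.nodup, h, by simp [h₁, h₂]⟩

/-- For `a < b < c` and `z ∉ {a, b, c}`: the vertex of the convex quadrilateral `{a, b, c, z}`
opposite to `z`. -/
def opposite (a b c z : Fin n) : Fin n :=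
  if a < z ∧ z < b then c else if b < z ∧ z < c then a else b

theorem opposite_mem (a b c z : Fin n) : opposite a b c z ∈ ({a, b, c} : Finset (Fin n)) := by
  unfold opposite
  split_ifs <;> simp

theorem opposite_eq_of_cyclicSorted {a b c p q r s : Fin n} (hab : a < b) (hbc : b < c)
    (h : CyclicSorted [p, q, r, s]) (he : ({p, q, r} : Finset (Fin n)) ⊆ {a, b, c}) :
    opposite a b c s = q := by
  simp only [insert_subset_iff, singleton_subset_iff, mem_insert, mem_singleton] at he
  rw [cyclicSorted_four_iff] at h
  unfold opposite
  simp only [Fin.lt_def, Fin.ext_iff] at hab hbc he h ⊢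
  split_ifs <;> omega

theorem exists_cyclicSorted_of_notMem {a b c z : Fin n} (hab : a < b) (hbc : b < c)
    (hz : z ∉ ({a, b, c} : Finset (Fin n))) :
    ∃ p q r, CyclicSorted [p, q, r, z] ∧ ({p, q, r} : Finset (Fin n)) = {a, b, c} := by
  simp only [mem_insert, mem_singleton, not_or] at hz
  simp only [cyclicSorted_four_iff]
  rcases lt_or_gt_of_ne hz.1 with hza | haz
  · exact ⟨a, b, c, by tauto, rfl⟩
  rcases lt_or_gt_of_ne hz.2.1 with hzb | hbz
  · exact ⟨b, c, a, by tauto, by grind⟩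
  rcases lt_or_gt_of_ne hz.2.2 with hzc | hcz
  · exact ⟨c, a, b, by tauto, by grind⟩
  · exact ⟨a, b, c, by tauto, rfl⟩

theorem hasCopy_D1_pair_iff {a b c : Fin n} (hab : a < b) (hbc : b < c) {f : Finset (Fin n)} :
    HasCopy D1cgh {{a, b, c}, f} ↔ ∃ z ∉ ({a, b, c} : Finset (Fin n)),
      ∃ w ∈ ({a, b, c} : Finset (Fin n)),
        w = opposite a b c z ∧ f = insert z (({a, b, c} : Finset (Fin n)).erase w) := by
  rw [hasCopy_D1_iff]
  constructor
  · rintro ⟨p, q, r, s, h, h₁, h₂⟩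
    obtain ⟨hpq, hpr, hps, hqr, hqs, hrs⟩ := h.pairwise_ne₄
    simp only [mem_insert, mem_singleton] at h₁ h₂
    have hne : ({p, q, r} : Finset (Fin n)) ≠ {p, r, s} := fun h' => by
      have hq : q ∈ ({p, r, s} : Finset (Fin n)) := h' ▸ by simp
      simp only [mem_insert, mem_singleton] at hq
      tauto
    rcases h₁ with he | hf
    · have hf : f = {p, r, s} := (h₂.resolve_left fun h₂ => hne (he.trans h₂.symm)).symm
      refine ⟨s, by grind, q, by grind, (opposite_eq_of_cyclicSorted hab hbc h he.le).symm, ?_⟩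
      rw [← he, hf]
      grind
    · have he : ({p, r, s} : Finset (Fin n)) = {a, b, c} :=
        h₂.resolve_right fun h₂ => hne (hf.trans h₂.symm)
      have h' : CyclicSorted [r, s, p, q] := h.rotate 2
      refine ⟨q, by grind, s, by grind,
        (opposite_eq_of_cyclicSorted hab hbc h' (he ▸ by simp [insert_subset_iff])).symm, ?_⟩
      rw [← he, ← hf]
      grind
  · rintro ⟨z, hz, w, -, rfl, rfl⟩
    obtain ⟨p, q, r, h, he⟩ := exists_cyclicSorted_of_notMem hab hbc hz
    obtain ⟨hpq, hpr, hpz, hqr, hqz, hrz⟩ := h.pairwise_ne₄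
    refine ⟨p, q, r, z, h, by simp [he], ?_⟩
    rw [opposite_eq_of_cyclicSorted hab hbc h he.le, ← he]
    simp only [mem_insert, mem_singleton]
    right
    grind

theorem hasCopy_D2_pair_iff {a b c : Fin n} (hab : a < b) (hbc : b < c) {f : Finset (Fin n)} :
    HasCopy D2cgh {{a, b, c}, f} ↔ ∃ z ∉ ({a, b, c} : Finset (Fin n)),
      ∃ w ∈ ({a, b, c} : Finset (Fin n)),
        w ≠ opposite a b c z ∧ f = insert z (({a, b, c} : Finset (Fin n)).erase w) := by
  rw [hasCopy_D2_iff]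
  constructor
  · rintro ⟨p, q, r, s, h, h₁, h₂⟩
    obtain ⟨hpq, hpr, hps, hqr, hqs, hrs⟩ := h.pairwise_ne₄
    simp only [mem_insert, mem_singleton] at h₁ h₂
    have hne : ({p, q, r} : Finset (Fin n)) ≠ {p, q, s} := fun h' => by
      have hr : r ∈ ({p, q, s} : Finset (Fin n)) := h' ▸ by simp
      simp only [mem_insert, mem_singleton] at hr
      tauto
    rcases h₁ with he | hf
    · have hf : f = {p, q, s} := (h₂.resolve_left fun h₂ => hne (he.trans h₂.symm)).symm
      refine ⟨s, by grind, r, by grind, ?_, ?_⟩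
      · rw [opposite_eq_of_cyclicSorted hab hbc h he.le]
        exact hqr.symm
      · rw [← he, hf]
        grind
    · have he : ({p, q, s} : Finset (Fin n)) = {a, b, c} :=
        h₂.resolve_right fun h₂ => hne (hf.trans h₂.symm)
      have h' : CyclicSorted [s, p, q, r] := h.rotate 3
      refine ⟨r, by grind, s, by grind, ?_, ?_⟩
      · rw [opposite_eq_of_cyclicSorted hab hbc h' (he ▸ by simp [insert_subset_iff])]
        exact hps.symm
      · rw [← he, ← hf]
        grind
  · rintro ⟨z, hz, w, hw, hwo, rfl⟩
    obtain ⟨p, q, r, h, he⟩ := exists_cyclicSorted_of_notMem hab hbc hz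
    obtain ⟨hpq, hpr, hpz, hqr, hqz, hrz⟩ := h.pairwise_ne₄
    rw [opposite_eq_of_cyclicSorted hab hbc h he.le] at hwo
    rw [← he] at hw ⊢
    simp only [mem_insert, mem_singleton] at hw ⊢
    rcases hw with rfl | rfl | rfl
    · exact ⟨q, r, z, w, h.rotate 1, by grind, by grind⟩
    · exact absurd rfl hwo
    · exact ⟨p, q, w, z, h, by simp, by grind⟩

theorem card_filter_eq_opposite {a b c : Fin n} (hab : a < b) (hbc : b < c) :
    (({a, b, c} ×ˢ ({a, b, c} : Finset (Fin n))ᶜ).filter fun x => x.1 = opposite a b c x.2).card =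
      n - 3 := by
  have : (({a, b, c} ×ˢ ({a, b, c} : Finset (Fin n))ᶜ).filter fun x => x.1 = opposite a b c x.2) =
      ({a, b, c} : Finset (Fin n))ᶜ.image fun z => (opposite a b c z, z) := by
    ext ⟨w, z⟩
    simp only [mem_filter, mem_product, mem_compl, mem_image, Prod.mk.injEq]
    constructor
    · rintro ⟨⟨-, hz⟩, rfl⟩
      exact ⟨z, hz, rfl, rfl⟩
    · rintro ⟨z, hz, rfl, rfl⟩
      exact ⟨⟨opposite_mem a b c z, hz⟩, rfl⟩
  rw [this, card_image_of_injective _ fun z z' h => congrArg Prod.snd h, card_compl,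
    Fintype.card_fin, card_eq_three.2 ⟨a, b, c, hab.ne, (hab.trans hbc).ne, hbc.ne, rfl⟩]

theorem ncard_setOf_hasCopy_D1_pair {a b c : Fin n} (hab : a < b) (hbc : b < c) :
    {f : Finset (Fin n) | f.card = 3 ∧ HasCopy D1cgh {{a, b, c}, f}}.ncard = n - 3 := by
  simp only [hasCopy_D1_pair_iff hab hbc]
  rw [ncard_setOf_insert_erase (card_eq_three.2 ⟨a, b, c, hab.ne, (hab.trans hbc).ne, hbc.ne, rfl⟩)
    fun x => x.1 = opposite a b c x.2, card_filter_eq_opposite hab hbc]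

theorem ncard_setOf_hasCopy_D2_pair {a b c : Fin n} (hab : a < b) (hbc : b < c) :
    {f : Finset (Fin n) | f.card = 3 ∧ HasCopy D2cgh {{a, b, c}, f}}.ncard = 2 * (n - 3) := by
  have he : ({a, b, c} : Finset (Fin n)).card = 3 :=
    card_eq_three.2 ⟨a, b, c, hab.ne, (hab.trans hbc).ne, hbc.ne, rfl⟩
  simp only [hasCopy_D2_pair_iff hab hbc]
  rw [ncard_setOf_insert_erase he fun x => x.1 ≠ opposite a b c x.2]
  have := card_filter_add_card_filter_not (s := {a, b, c} ×ˢ ({a, b, c} : Finset (Fin n))ᶜ)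
    fun x => x.1 = opposite a b c x.2
  rw [card_filter_eq_opposite hab hbc, card_product, card_compl, Fintype.card_fin, he] at this
  simp only [ne_eq]
  omega

theorem exists_isSat {F : CGH} (hF : F.edges.Nonempty) (r : ℕ) :
    ∃ H : Finset (Finset (Fin n)), IsSat F r H := by
  obtain ⟨H, -, ⟨hr, hfree⟩, hmax⟩ := Finite.exists_le_maximal (a := ∅)
    (p := fun H : Finset (Finset (Fin n)) => (∀ h ∈ H, h.card = r) ∧ ¬HasCopy F H)
    ⟨by simp, fun ⟨g, _, _, hg⟩ => by obtain ⟨A, hA⟩ := hF; simpa using hg A hA⟩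
  refine ⟨H, hr, hfree, fun e he heH => ?_⟩
  by_contra hcopy
  have hins : (∀ h ∈ insert e H, h.card = r) ∧ ¬HasCopy F (insert e H) :=
    ⟨forall_mem_insert _ _ _ |>.2 ⟨he, hr⟩, hcopy⟩
  exact heH (hmax hins (subset_insert e H) (mem_insert_self e H))

theorem exists_hasCopy_pair_of_hasCopy_insert {F : CGH} {A B : Finset (Fin F.m)}
    (hF : F.edges = {A, B}) (hAB : A ≠ B) {H : Finset (Finset (Fin n))} {e : Finset (Fin n)}
    (h : HasCopy F (insert e H)) (hH : ¬HasCopy F H) : ∃ h ∈ H, HasCopy F {h, e} := by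
  obtain ⟨g, hg, hcyc, hedges⟩ := h
  have hA := hedges A (by simp [hF])
  have hB := hedges B (by simp [hF])
  have hne : A.image g ≠ B.image g := fun h => hAB (image_injective hg h)
  have hcopy : ∀ H', A.image g ∈ H' → B.image g ∈ H' → HasCopy F H' := fun H' hA hB =>
    ⟨g, hg, hcyc, by simp [hF, hA, hB]⟩
  rw [mem_insert] at hA hB
  rcases hA with hA | hA
  · exact ⟨B.image g, hB.resolve_left (hA ▸ hne.symm), hcopy _ (by simp [hA]) (by simp)⟩
  rcases hB with hB | hB
  · exact ⟨A.image g, hA, hcopy _ (by simp) (by simp [hB])⟩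
  · exact absurd (hcopy H hA hB) hH

theorem choose_three_le_satNum_mul {F : CGH} {A B : Finset (Fin F.m)} (hF : F.edges = {A, B})
    (hAB : A ≠ B) {k : ℕ}
    (hk : ∀ e : Finset (Fin n), e.card = 3 → {f | f.card = 3 ∧ HasCopy F {e, f}}.ncard ≤ k) :
    n.choose 3 ≤ satNum F 3 n * (k + 1) := by
  classical
  obtain ⟨H₀, hH₀⟩ := exists_isSat (n := n) (hF ▸ insert_nonempty A {B}) 3
  obtain ⟨H, hH, hcard⟩ := Nat.sInf_mem
    (s := {k | ∃ H : Finset (Finset (Fin n)), IsSat F 3 H ∧ H.card = k}) ⟨_, H₀, hH₀, rfl⟩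
  rw [satNum, ← hcard]
  let T (h : Finset (Fin n)) := (powersetCard 3 univ).filter fun f => HasCopy F {h, f}
  have hT : ∀ h ∈ H, (T h).card ≤ k := fun h hh => by
    rw [← Set.ncard_coe_finset]
    convert hk h (hH.1 h hh) using 2
    ext f
    simp [T]
  have hcover : powersetCard 3 univ ⊆ H.biUnion fun h => insert h (T h) := by
    intro e he
    rw [mem_powersetCard_univ] at he
    by_cases heH : e ∈ H
    · exact mem_biUnion.2 ⟨e, heH, mem_insert_self e _⟩
    obtain ⟨h, hh, hcopy⟩ :=
      exists_hasCopy_pair_of_hasCopy_insert hF hAB (hH.2.2 e he heH) hH.2.1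
    exact mem_biUnion.2 ⟨h, hh, mem_insert_of_mem (by simp [T, he, hcopy])⟩
  calc n.choose 3 = (powersetCard 3 (univ : Finset (Fin n))).card := by simp
    _ ≤ (H.biUnion fun h => insert h (T h)).card := card_le_card hcover
    _ ≤ ∑ h ∈ H, (insert h (T h)).card := card_biUnion_le
    _ ≤ ∑ _h ∈ H, (k + 1) :=
      sum_le_sum fun h hh => (card_insert_le _ _).trans (Nat.add_le_add_right (hT h hh) 1)
    _ = H.card * (k + 1) := by simp

end

theorem sat_D1_D2_lower (n : ℕ) (hn : 5 ≤ n) :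
    (∀ e : Finset (Fin n), e.card = 3 →
      {f : Finset (Fin n) | f.card = 3 ∧ HasCopy D1cgh ({e, f} : Finset (Finset (Fin n)))}.ncard
          = n - 3 ∧
      {f : Finset (Fin n) | f.card = 3 ∧ HasCopy D2cgh ({e, f} : Finset (Finset (Fin n)))}.ncard
          = 2 * (n - 3)) ∧
    ((n * (n - 1) : ℕ) : ℝ) / 6 ≤ (satNum D1cgh 3 n : ℝ) ∧
    ((n * (n - 1) * (n - 2) : ℕ) : ℝ) / (6 * (2 * n - 5 : ℕ)) ≤ (satNum D2cgh 3 n : ℝ) := by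
  have hcount (e : Finset (Fin n)) (he : e.card = 3) :
      {f : Finset (Fin n) | f.card = 3 ∧ HasCopy D1cgh {e, f}}.ncard = n - 3 ∧
      {f : Finset (Fin n) | f.card = 3 ∧ HasCopy D2cgh {e, f}}.ncard = 2 * (n - 3) := by
    obtain ⟨a, b, c, hab, hbc, rfl⟩ := exists_lt_lt_of_card_eq_three he
    exact ⟨ncard_setOf_hasCopy_D1_pair hab hbc, ncard_setOf_hasCopy_D2_pair hab hbc⟩
  have hD1 := choose_three_le_satNum_mul (n := n) (F := D1cgh) rfl
    (by decide : ({0, 1, 2} : Finset (Fin 4)) ≠ {0, 2, 3}) fun e he => (hcount e he).1.le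
  have hD2 := choose_three_le_satNum_mul (n := n) (F := D2cgh) rfl
    (by decide : ({0, 1, 2} : Finset (Fin 4)) ≠ {0, 1, 3}) fun e he => (hcount e he).2.le
  have hchoose := Nat.six_mul_choose_three n
  refine ⟨hcount, ?_, ?_⟩
  · rw [div_le_iff₀ (by norm_num)]
    rw [show n - 3 + 1 = n - 2 by omega] at hD1
    have : n * (n - 1) * (n - 2) ≤ satNum D1cgh 3 n * 6 * (n - 2) := by nlinarith
    exact_mod_cast Nat.le_of_mul_le_mul_right this (by omega)
  · rw [div_le_iff₀ (by norm_cast; omega)]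
    rw [show 2 * (n - 3) + 1 = 2 * n - 5 by omega] at hD2
    have : n * (n - 1) * (n - 2) ≤ satNum D2cgh 3 n * (6 * (2 * n - 5)) := by nlinarith
    exact_mod_cast this
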